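/- Let N be a natural number and let b, z be real numbers with sin(2πzs) ≠ 0 for every integer s with 1 ≤ s ≤ 2N. Then the resolution for a uniform linear array, Δ = (1/(2N+1)²)·|∑_{n=-N}^{N} exp(2πi·(-b·n + z·n²))|², satisfies Δ = 1/(2N+1) + (2/(2N+1)²)·∑_{s=1}^{2N} Φ(z,s,N)·cos(2πbs). -/

import Mathlib

/-!
Expand `‖∑ₙ e^{i w n}‖²` as `∑ₙ ∑ₘ cos (w n - w m)` and group the pairs `n > m` by their gap
`s = n - m`. For the phase `w n = 2π(-bn + zn²)` of the Fresnel approximation the difference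
`w (m + s) - w m = -2πbs + 2πzs (2m + s)` is linear in `m`, and `2m + s` runs symmetrically
about `0` as `m` ranges over `[-N, N - s]`; the sum over `m` of the cosines is then a centred
Dirichlet kernel, equal to `cos (2πbs) · Φ(z, s, N)`.
-/

open Real Finset

/-- `Φ(x, y, K) = sin(2πxy(2K − y + 1)) / sin(2πxy)`. -/
noncomputable def Phi (x : ℝ) (y : ℤ) (K : ℕ) : ℝ :=
  Real.sin (2 * π * x * y * (2 * K - y + 1)) / Real.sin (2 * π * x * y)

theorem Int.sum_Icc_sub {M : Type*} [AddCommGroup M] (f : ℤ → M) {a c : ℤ} (h : a ≤ c + 1) :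
    ∑ i ∈ Icc a c, (f (i + 1) - f i) = f (c + 1) - f a := by
  induction c, (by omega : a - 1 ≤ c) using Int.leInduction with
  | base => simp
  | succ c hc ih =>
    rw [← insert_Icc_right_eq_Icc_add_one (by omega), sum_insert (by simp), ih (by omega)]
    abel

-- `2 sin θ cos (α + kθ) = sin (α + (k + 1)θ) - sin (α + (k - 1)θ)` makes the sum telescope.
theorem sum_Icc_cos_centered (α θ : ℝ) (hθ : sin θ ≠ 0) {a c : ℤ} (h : a ≤ c + 1) :
    ∑ m ∈ Icc a c, cos (α + θ * (2 * m - a - c)) = cos α * (sin ((c - a + 1) * θ) / sin θ) := by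
  set F : ℤ → ℝ := fun m => sin (α + θ * (2 * m - a - c - 1))
  have hstep : ∀ m : ℤ, F (m + 1) - F m = 2 * sin θ * cos (α + θ * (2 * m - a - c)) := by
    intro m
    simp only [F, sin_sub_sin]
    congr 3 <;> push_cast <;> ring
  rw [mul_div_assoc', eq_div_iff hθ, ← mul_right_inj' (two_ne_zero' ℝ), sum_mul, mul_sum]
  calc ∑ m ∈ Icc a c, 2 * (cos (α + θ * (2 * m - a - c)) * sin θ)
      = ∑ m ∈ Icc a c, (F (m + 1) - F m) := sum_congr rfl fun m _ => by rw [hstep]; ring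
    _ = F (c + 1) - F a := Int.sum_Icc_sub F h
    _ = 2 * sin ((c - a + 1) * θ) * cos α := by
      simp only [F, sin_sub_sin]
      congr 3 <;> push_cast <;> ring
    _ = 2 * (cos α * sin ((c - a + 1) * θ)) := by ring

theorem norm_sum_exp_mul_I_sq {ι : Type*} (s : Finset ι) (w : ι → ℝ) :
    ‖∑ n ∈ s, Complex.exp (w n * Complex.I)‖ ^ 2 = ∑ n ∈ s, ∑ m ∈ s, cos (w n - w m) := by
  have hterm : ∀ x y : ℝ,
      Complex.exp (x * Complex.I) * (starRingEnd ℂ) (Complex.exp (y * Complex.I))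
        = Complex.exp ((x - y : ℝ) * Complex.I) := by
    intro x y
    rw [← Complex.exp_conj, ← Complex.exp_add, map_mul, Complex.conj_ofReal, Complex.conj_I]
    push_cast
    ring_nf
  calc ‖∑ n ∈ s, Complex.exp (w n * Complex.I)‖ ^ 2
      = (∑ n ∈ s, Complex.exp (w n * Complex.I) *
          (starRingEnd ℂ) (∑ m ∈ s, Complex.exp (w m * Complex.I))).re := by
        rw [← sum_mul, Complex.mul_conj', ← Complex.ofReal_pow, Complex.ofReal_re]
    _ = ∑ n ∈ s, ∑ m ∈ s, cos (w n - w m) := by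
        simp only [map_sum, mul_sum, hterm, Complex.re_sum, Complex.exp_ofReal_mul_I_re]

theorem Finset.sum_sum_eq_sum_add_two_nsmul_sum_sum_lt {ι M : Type*} [LinearOrder ι]
    [AddCommMonoid M] (s : Finset ι) (g : ι → ι → M) (hg : ∀ n m, g n m = g m n) :
    ∑ n ∈ s, ∑ m ∈ s, g n m = ∑ n ∈ s, g n n + 2 • ∑ n ∈ s, ∑ m ∈ s with m < n, g n m := by
  have hsplit : ∀ n ∈ s, ∑ m ∈ s, g n m
      = ∑ m ∈ s with m < n, g n m + g n n + ∑ m ∈ s with n < m, g n m := by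
    intro n hn
    rw [sum_filter, sum_filter, ← sum_ite_eq_of_mem' s n (g n) hn, ← sum_add_distrib,
      ← sum_add_distrib]
    refine sum_congr rfl fun m _ => ?_
    rcases lt_trichotomy m n with h | rfl | h
    · simp [h, h.ne, h.not_gt]
    · simp
    · simp [h, h.ne', h.not_gt]
  have hupper : ∑ n ∈ s, ∑ m ∈ s with n < m, g n m = ∑ n ∈ s, ∑ m ∈ s with m < n, g n m := by
    rw [sum_comm' (t' := s) (s' := fun m => s.filter (· < m))
      (by intro n m; simp only [mem_filter]; tauto)]
    exact sum_congr rfl fun m _ => sum_congr rfl fun n _ => hg n m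
  rw [sum_congr rfl hsplit, sum_add_distrib, sum_add_distrib, hupper, two_nsmul]
  abel

theorem Int.sum_Icc_sum_lt_eq_sum_gap {M : Type*} [AddCommMonoid M] (a c : ℤ)
    (f : ℤ → ℤ → M) :
    ∑ n ∈ Icc a c, ∑ m ∈ Icc a c with m < n, f n m
      = ∑ s ∈ Icc 1 (c - a), ∑ m ∈ Icc a (c - s), f (m + s) m := by
  rw [sum_sigma', sum_sigma']
  refine sum_nbij' (fun p => ⟨p.1 - p.2, p.2⟩) (fun q => ⟨q.2 + q.1, q.2⟩) ?_ ?_ ?_ ?_ ?_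
  all_goals simp <;> omega

noncomputable def ulaPhase (b z : ℝ) (n : ℤ) : ℝ := 2 * π * (-b * n + z * n ^ 2)

theorem sum_Icc_cos_ulaPhase_sub (N : ℕ) (b z : ℝ) {s : ℤ} (hs : s ≤ 2 * N + 1)
    (hθ : sin (2 * π * z * s) ≠ 0) :
    ∑ m ∈ Icc (-(N : ℤ)) (N - s), cos (ulaPhase b z (m + s) - ulaPhase b z m)
      = Phi z s N * cos (2 * π * b * s) :=
  calc ∑ m ∈ Icc (-(N : ℤ)) (N - s), cos (ulaPhase b z (m + s) - ulaPhase b z m)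
      = ∑ m ∈ Icc (-(N : ℤ)) (N - s), cos (-(2 * π * b * s)
          + 2 * π * z * s * (2 * m - ((-(N : ℤ) : ℤ) : ℝ) - (((N : ℤ) - s : ℤ) : ℝ))) :=
        sum_congr rfl fun m _ => by simp only [ulaPhase]; push_cast; ring_nf
    _ = cos (-(2 * π * b * s)) * (sin (((((N : ℤ) - s : ℤ) : ℝ) - ((-(N : ℤ) : ℤ) : ℝ) + 1)
          * (2 * π * z * s)) / sin (2 * π * z * s)) :=
        sum_Icc_cos_centered _ _ hθ (by omega)
    _ = Phi z s N * cos (2 * π * b * s) := by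
        rw [Phi, cos_neg, mul_comm]
        push_cast
        ring_nf

theorem norm_sum_exp_ulaPhase_sq (N : ℕ) (b z : ℝ)
    (hz : ∀ s : ℤ, 1 ≤ s → s ≤ 2 * N → sin (2 * π * z * s) ≠ 0) :
    ‖∑ n ∈ Icc (-(N : ℤ)) N, Complex.exp (ulaPhase b z n * Complex.I)‖ ^ 2
      = (2 * N + 1) + 2 * ∑ s ∈ Icc (1 : ℤ) (2 * N), Phi z s N * cos (2 * π * b * s) := by
  have hgap : ∀ s ∈ Icc (1 : ℤ) (2 * N),
      ∑ m ∈ Icc (-(N : ℤ)) (N - s), cos (ulaPhase b z (m + s) - ulaPhase b z m)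
        = Phi z s N * cos (2 * π * b * s) := fun s hs => by
    rw [mem_Icc] at hs
    exact sum_Icc_cos_ulaPhase_sub N b z (by omega) (hz s hs.1 hs.2)
  have hcard : ((Icc (-(N : ℤ)) N).card : ℝ) = 2 * N + 1 := by
    rw [Int.card_Icc, show (N : ℤ) + 1 - -N = ((2 * N + 1 : ℕ) : ℤ) by push_cast; ring,
      Int.toNat_natCast]
    push_cast
    ring
  rw [norm_sum_exp_mul_I_sq, sum_sum_eq_sum_add_two_nsmul_sum_sum_lt _ _
    (fun n m => by rw [← cos_neg, neg_sub]), Int.sum_Icc_sum_lt_eq_sum_gap,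
    show (N : ℤ) - -N = 2 * N by ring, sum_congr rfl hgap]
  simp only [sub_self, cos_zero, sum_const, hcard, nsmul_eq_mul, mul_one]
  push_cast
  ring

theorem ula_resolution_closed_form (N : ℕ) (b z : ℝ)
    (hz : ∀ s : ℤ, 1 ≤ s → s ≤ 2 * N → Real.sin (2 * π * z * s) ≠ 0)
    (Δ : ℝ)
    (hΔ : Δ = (1 / (2 * (N : ℝ) + 1) ^ 2) *
      ‖∑ n ∈ Finset.Icc (-(N : ℤ)) N,
        Complex.exp (2 * π * Complex.I * (-b * n + z * (n : ℝ) ^ 2))‖ ^ 2) :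
    Δ = 1 / (2 * (N : ℝ) + 1) + (2 / (2 * (N : ℝ) + 1) ^ 2) *
      ∑ s ∈ Finset.Icc (1 : ℤ) (2 * N), Phi z s N * Real.cos (2 * π * b * s) := by
  have hphase : ∀ n : ℤ, Complex.exp (2 * π * Complex.I * (-b * n + z * (n : ℝ) ^ 2))
      = Complex.exp (ulaPhase b z n * Complex.I) := fun n => by push_cast [ulaPhase]; ring_nf
  rw [hΔ, sum_congr rfl fun n _ => hphase n, norm_sum_exp_ulaPhase_sq N b z hz]
  field_simp
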